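/- Language-Thought Gap lower bound: Let p ∈ [0,1], and let P, R be probability mass functions on a finite set S. Define Q(a) = p·P(a) + (1-p)·R(a). Assume Q(a) > 0 whenever P(a) > 0. Then D_KL(P‖Q) ≥ ((1−p)²/2) · V(P,R)², where V(P,R) = Σ_a |P(a) − R(a)|. -/

import Mathlib

open Real Finset Set InformationTheory

/-
Everything rests on the pointwise bound `x log (x / y) ≥ x - y + (3/2) (x - y)² / (x + 2 y)`,
i.e. `klFun t ≥ (3/2) (t - 1)² / (t + 2)`, which follows from the first-derivative test. Summing it
over the support, the linear terms cancel, and Cauchy–Schwarz with weights `P + 2 Q` (total mass 3)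
gives Pinsker's inequality `D(P‖Q) ≥ V(P, Q)² / 2`. Finally `P - Q = (1 - p) (P - R)` for the
mixture `Q`, so `V(P, Q) = (1 - p) V(P, R)`.
-/

lemma hasDerivAt_log_sub_two_mul_sub_one_div_add_one {x : ℝ} (hx : 0 < x) :
    HasDerivAt (fun x => log x - 2 * (x - 1) / (x + 1)) ((x - 1) ^ 2 / (x * (x + 1) ^ 2)) x := by
  refine ((hasDerivAt_log hx.ne').sub ((((hasDerivAt_id' x).sub_const 1).const_mul 2).div
    ((hasDerivAt_id' x).add_const 1) (by positivity))).congr_deriv ?_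
  field_simp
  ring

lemma monotoneOn_log_sub_two_mul_sub_one_div_add_one :
    MonotoneOn (fun x => log x - 2 * (x - 1) / (x + 1)) (Ioi 0) := by
  refine monotoneOn_of_hasDerivWithinAt_nonneg (convex_Ioi 0)
    (f' := fun x => (x - 1) ^ 2 / (x * (x + 1) ^ 2))
    (fun x hx =>
      (hasDerivAt_log_sub_two_mul_sub_one_div_add_one hx).continuousAt.continuousWithinAt)
    (fun x hx => ?_) (fun x hx => ?_)
  · rw [interior_Ioi] at hx
    exact (hasDerivAt_log_sub_two_mul_sub_one_div_add_one hx).hasDerivWithinAt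
  · rw [interior_Ioi] at hx
    have : 0 < x := hx
    positivity

lemma hasDerivAt_klFun_sub_sq_div {x : ℝ} (hx : 0 < x) :
    HasDerivAt (fun t => klFun t - 3 / 2 * ((t - 1) ^ 2 / (t + 2)))
      (log x - 3 / 2 * ((x - 1) * (x + 5) / (x + 2) ^ 2)) x := by
  refine ((hasDerivAt_klFun hx.ne').sub (((((hasDerivAt_id' x).sub_const 1).fun_pow 2).div
    ((hasDerivAt_id' x).add_const 2) (by positivity)).const_mul (3 / 2))).congr_deriv ?_
  field_simp
  ring

lemma three_halves_mul_sq_div_le_klFun {t : ℝ} (ht : 0 ≤ t) :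
    3 / 2 * ((t - 1) ^ 2 / (t + 2)) ≤ klFun t := by
  rcases ht.eq_or_lt with rfl | ht
  · norm_num [klFun_zero]
  set g : ℝ → ℝ := fun t => klFun t - 3 / 2 * ((t - 1) ^ 2 / (t + 2))
  set φ : ℝ → ℝ := fun x => log x - 2 * (x - 1) / (x + 1)
  have hderiv : ∀ x, 0 < x → deriv g x = φ x + (x - 1) ^ 3 / (2 * (x + 1) * (x + 2) ^ 2) := by
    intro x hx
    rw [(hasDerivAt_klFun_sub_sq_div hx).deriv]
    simp only [φ]
    field_simp
    ring
  -- `φ` is increasing with `φ 1 = 0`, so both summands of `g'` have the sign of `x - 1`.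
  have hφ1 : φ 1 = 0 := by norm_num [φ]
  have hdiff : DifferentiableOn ℝ g (Ioi 0) := fun x hx =>
    (hasDerivAt_klFun_sub_sq_div hx).differentiableAt.differentiableWithinAt
  have hmin : IsMinOn g (Ioi 0) 1 := by
    refine isMinOn_Ioi_of_deriv (hasDerivAt_klFun_sub_sq_div one_pos).continuousAt
      (hdiff.mono Ioo_subset_Ioi_self) (hdiff.mono (Ioi_subset_Ioi zero_le_one))
      (fun x hx => ?_) (fun x hx => ?_)
    · have hx0 : 0 < x := hx.1
      have hφ : φ x ≤ 0 := hφ1 ▸ monotoneOn_log_sub_two_mul_sub_one_div_add_one hx0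
        (mem_Ioi.2 one_pos) hx.2.le
      have : (x - 1) ^ 3 / (2 * (x + 1) * (x + 2) ^ 2) ≤ 0 :=
        div_nonpos_of_nonpos_of_nonneg (Odd.pow_nonpos (by decide) (by linarith [hx.2]))
          (by positivity)
      linarith [hderiv x hx0]
    · have hx0 : (0 : ℝ) < x := one_pos.trans hx
      have hφ : 0 ≤ φ x := hφ1 ▸ monotoneOn_log_sub_two_mul_sub_one_div_add_one
        (mem_Ioi.2 one_pos) (mem_Ioi.2 hx0) hx.le
      have : 0 ≤ (x - 1) ^ 3 / (2 * (x + 1) * (x + 2) ^ 2) :=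
        div_nonneg (pow_nonneg (by linarith [mem_Ioi.1 hx]) _) (by positivity)
      linarith [hderiv x hx0]
  have := hmin (mem_Ioi.2 ht)
  simp only [g, klFun_one] at this
  norm_num at this
  linarith

lemma sub_add_three_halves_mul_sq_div_le_mul_log {x y : ℝ} (hx : 0 ≤ x) (hy : 0 ≤ y)
    (hxy : 0 < x → 0 < y) :
    x - y + 3 / 2 * ((x - y) ^ 2 / (x + 2 * y)) ≤ x * log (x / y) := by
  rcases hy.eq_or_lt with rfl | hy
  · obtain rfl := hx.eq_of_not_lt fun h => (hxy h).false
    simp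
  have hbound := mul_le_mul_of_nonneg_left
    (three_halves_mul_sq_div_le_klFun (div_nonneg hx hy.le)) hy.le
  have hlhs : y * (3 / 2 * ((x / y - 1) ^ 2 / (x / y + 2))) =
      3 / 2 * ((x - y) ^ 2 / (x + 2 * y)) := by
    field_simp
  have hrhs : y * klFun (x / y) = x * log (x / y) + y - x := by
    rw [klFun_apply]
    field_simp
  linarith

section Pinsker

variable {S : Type*} [Fintype S]

noncomputable def discreteKLDiv (P Q : S → ℝ) : ℝ :=
  ∑ a ∈ univ.filter (fun a => 0 < P a), P a * log (P a / Q a)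

variable {P Q : S → ℝ}

lemma discreteKLDiv_eq_sum (hP : ∀ a, 0 ≤ P a) :
    discreteKLDiv P Q = ∑ a, P a * log (P a / Q a) :=
  sum_filter_of_ne fun a _ hne => (hP a).lt_of_ne' fun h => hne (by simp [h])

lemma sq_sum_abs_sub_le_mul_sum_sq_div (hP : ∀ a, 0 ≤ P a) (hQ : ∀ a, 0 ≤ Q a) :
    (∑ a, |P a - Q a|) ^ 2 ≤
      (∑ a, (P a + 2 * Q a)) * ∑ a, (P a - Q a) ^ 2 / (P a + 2 * Q a) := by
  refine sum_sq_le_sum_mul_sum_of_sq_le_mul _ (fun a _ => by linarith [hP a, hQ a])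
    (fun a _ => div_nonneg (sq_nonneg _) (by linarith [hP a, hQ a])) fun a _ => ?_
  rcases (show 0 ≤ P a + 2 * Q a by linarith [hP a, hQ a]).eq_or_lt with h | h
  · have hPa : P a = 0 := by linarith [hP a, hQ a]
    have hQa : Q a = 0 := by linarith [hP a, hQ a]
    simp [hPa, hQa]
  · rw [sq_abs, mul_div_cancel₀ _ h.ne']

theorem sq_sum_abs_sub_div_two_le_discreteKLDiv (hP : ∀ a, 0 ≤ P a) (hP1 : ∑ a, P a = 1)
    (hQ : ∀ a, 0 ≤ Q a) (hQ1 : ∑ a, Q a = 1) (hPQ : ∀ a, 0 < P a → 0 < Q a) :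
    (∑ a, |P a - Q a|) ^ 2 / 2 ≤ discreteKLDiv P Q := by
  set T := ∑ a, (P a - Q a) ^ 2 / (P a + 2 * Q a)
  have hcs : (∑ a, |P a - Q a|) ^ 2 ≤ 3 * T := by
    have h := sq_sum_abs_sub_le_mul_sum_sq_div hP hQ
    rwa [sum_add_distrib, ← mul_sum, hP1, hQ1, show (1 : ℝ) + 2 * 1 = 3 by norm_num] at h
  have hpointwise : 3 / 2 * T ≤ ∑ a, P a * log (P a / Q a) := by
    calc 3 / 2 * T = ∑ a, (P a - Q a + 3 / 2 * ((P a - Q a) ^ 2 / (P a + 2 * Q a))) := by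
          rw [sum_add_distrib, sum_sub_distrib, hP1, hQ1, mul_sum, sub_self, zero_add]
      _ ≤ _ := sum_le_sum fun a _ =>
          sub_add_three_halves_mul_sq_div_le_mul_log (hP a) (hQ a) (hPQ a)
  rw [discreteKLDiv_eq_sum hP]
  linarith

lemma sum_abs_sub_mixture (p : ℝ) (R : S → ℝ) :
    ∑ a, |P a - (p * P a + (1 - p) * R a)| = |1 - p| * ∑ a, |P a - R a| := by
  rw [mul_sum]
  refine sum_congr rfl fun a _ => ?_
  rw [← abs_mul]
  ring_nf

end Pinsker

theorem language_thought_gap {S : Type*} [Fintype S] (p : ℝ) (hp0 : 0 ≤ p) (hp1 : p ≤ 1)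
    (P R : S → ℝ)
    (hP0 : ∀ a, 0 ≤ P a) (hP1 : ∑ a, P a = 1)
    (hR0 : ∀ a, 0 ≤ R a) (hR1 : ∑ a, R a = 1)
    (Q : S → ℝ) (hQ : ∀ a, Q a = p * P a + (1 - p) * R a)
    (habs : ∀ a, 0 < P a → 0 < Q a) :
    ∑ a ∈ Finset.univ.filter (fun a => 0 < P a), P a * Real.log (P a / Q a) ≥
      ((1 - p) ^ 2 / 2) * (∑ a, |P a - R a|) ^ 2 := by
  have hQ0 (a : S) : 0 ≤ Q a :=
    hQ a ▸ add_nonneg (mul_nonneg hp0 (hP0 a)) (mul_nonneg (sub_nonneg.2 hp1) (hR0 a))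
  have hQ1 : ∑ a, Q a = 1 := by
    simp only [hQ, sum_add_distrib, ← mul_sum, hP1, hR1]
    ring
  have hV : ∑ a, |P a - Q a| = |1 - p| * ∑ a, |P a - R a| := by
    simp only [hQ]
    exact sum_abs_sub_mixture p R
  calc ((1 - p) ^ 2 / 2) * (∑ a, |P a - R a|) ^ 2 = (∑ a, |P a - Q a|) ^ 2 / 2 := by
        rw [hV, mul_pow, sq_abs]
        ring
    _ ≤ discreteKLDiv P Q := sq_sum_abs_sub_div_two_le_discreteKLDiv hP0 hP1 hQ0 hQ1 habs
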